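/- For every graph G, every vertex v, and every parameter r ∈ ℕ, every cycle of the ball B_{r/2}(v) is generated (over 𝔽₂, in the cycle space) by cycles of length at most r contained in B_{r/2}(v). -/

import Mathlib

/-!
Fix, for every vertex `x` of the ball, a shortest `v`–`x` path `P x`; it lies inside the ball.
For an edge `ab` of the ball the closed walk `P a · ab · (P b)⁻¹` has length
`d(v,a) + d(v,b) + 1 ≤ r`: when `r` is even this is exactly where the removal of the edges
between vertices at distance `r/2` is needed. Over `𝔽₂` these closed walks, summed along the
edges of a cycle, telescope to the cycle. Finally, the edges traversed an odd number of times
by a closed walk of length at most `r` form a sum of cycles of length at most `r`: split the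
walk at a repeated vertex into two shorter closed walks.
-/

open SimpleGraph

universe u

namespace LocalSep

variable {V : Type u}

/-- The ball of radius `r/2` around `v`: vertices of distance at most `⌊r/2⌋` from `v`;
if `r` is even, edges joining two vertices of distance exactly `r/2` are removed. -/
def ballVerts (G : SimpleGraph V) (v : V) (r : ℕ) : Set V :=
  {u | G.Reachable v u ∧ G.dist v u ≤ r / 2}

def ball (G : SimpleGraph V) (v : V) (r : ℕ) : G.Subgraph where
  verts := ballVerts G v r
  Adj u u' := G.Adj u u' ∧ u ∈ ballVerts G v r ∧ u' ∈ ballVerts G v r ∧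
    (Even r → ¬(G.dist v u = r / 2 ∧ G.dist v u' = r / 2))
  adj_sub h := h.1
  edge_vert h := h.2.1
  symm := ⟨fun u u' h => ⟨h.1.symm, h.2.2.1, h.2.1, fun he hc => h.2.2.2 he ⟨hc.2, hc.1⟩⟩⟩

/-- `v` is an `r`-local cutvertex if the punctured ball `B_{r/2}(v) - v` is disconnected. -/
def IsLocalCutvertex (G : SimpleGraph V) (r : ℕ) (v : V) : Prop :=
  ¬ ((ball G v r).deleteVerts {v}).coe.Connected

def HasShortCycle (G : SimpleGraph V) (r : ℕ) : Prop :=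
  ∃ (u : V) (c : G.Walk u u), c.IsCycle ∧ c.length ≤ r

/-- A connected graph is `r`-locally 2-connected if it has no `r`-local cutvertex
and contains a cycle of length at most `r`. -/
def LocallyTwoConnected (G : SimpleGraph V) (r : ℕ) : Prop :=
  G.Connected ∧ (∀ v : V, ¬ IsLocalCutvertex G r v) ∧ HasShortCycle G r

/-- The core of `(a₁, a₂)`: all vertices on shortest `a₁`–`a₂` paths. -/
def core (G : SimpleGraph V) (a₁ a₂ : V) : Set V :=
  {x | ∃ p : G.Walk a₁ a₂, p.IsPath ∧ p.length = G.dist a₁ a₂ ∧ x ∈ p.support}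

/-- A walk is contained in a subgraph. -/
def WalkIn {G : SimpleGraph V} (B : G.Subgraph) {x y : V} (p : G.Walk x y) : Prop :=
  p.toSubgraph ≤ B

/-- The label of a vertex `u` in a ball `B`: the set of (supports of) shortest paths
from the core `C` to `u` contained in `B`. -/
def labelIn (G : SimpleGraph V) (B : G.Subgraph) (C : Set V) (u : V) : Set (List V) :=
  {l | ∃ c ∈ C, ∃ p : G.Walk c u, p.IsPath ∧ WalkIn B p ∧
    (∀ c' ∈ C, ∀ q : G.Walk c' u, q.IsPath → WalkIn B q → p.length ≤ q.length) ∧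
    l = p.support}

/-- A potential vertex of the explorer-neighbourhood: a vertex together with a label. -/
abbrev EVert (V : Type u) : Type u := V × Set (List V)

/-- `p` is the copy of the vertex `p.1` in the labelled ball around `a ∈ {a₁, a₂}`. -/
def inCopy (G : SimpleGraph V) (a₁ a₂ : V) (r : ℕ) (a : V) (p : EVert V) : Prop :=
  p.1 ∈ ballVerts G a r ∧ p.2 = labelIn G (ball G a r) (core G a₁ a₂) p.1

/-- Vertices of the explorer-neighbourhood `Expl(a₁,a₂)`. -/
def explVerts (G : SimpleGraph V) (a₁ a₂ : V) (r : ℕ) : Set (EVert V) :=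
  {p | inCopy G a₁ a₂ r a₁ p ∨ inCopy G a₁ a₂ r a₂ p}

/-- The explorer-neighbourhood `Expl(a₁,a₂)`: the union of the two labelled balls,
where two copies of a vertex are identified iff their labels agree. -/
def expl (G : SimpleGraph V) (a₁ a₂ : V) (r : ℕ) : SimpleGraph (EVert V) where
  Adj p q :=
    (inCopy G a₁ a₂ r a₁ p ∧ inCopy G a₁ a₂ r a₁ q ∧ (ball G a₁ r).Adj p.1 q.1) ∨
    (inCopy G a₁ a₂ r a₂ p ∧ inCopy G a₁ a₂ r a₂ q ∧ (ball G a₂ r).Adj p.1 q.1)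
  symm := by
    refine ⟨fun p q h => ?_⟩
    rcases h with ⟨h1, h2, h3⟩ | ⟨h1, h2, h3⟩
    · exact Or.inl ⟨h2, h1, h3.symm⟩
    · exact Or.inr ⟨h2, h1, h3.symm⟩
  loopless := by
    refine ⟨fun p h => ?_⟩
    rcases h with ⟨-, -, h⟩ | ⟨-, -, h⟩ <;> exact G.ne_of_adj h.adj_sub rfl

/-- Vertices of the punctured explorer-neighbourhood `Expl(a₁,a₂) - a₁ - a₂`. -/
def pexplVerts (G : SimpleGraph V) (a₁ a₂ : V) (r : ℕ) : Set (EVert V) :=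
  {p | p ∈ explVerts G a₁ a₂ r ∧ p.1 ≠ a₁ ∧ p.1 ≠ a₂}

/-- The punctured explorer-neighbourhood `Expl(a₁,a₂) - a₁ - a₂`. -/
def pexpl (G : SimpleGraph V) (a₁ a₂ : V) (r : ℕ) :
    SimpleGraph (pexplVerts G a₁ a₂ r) :=
  SimpleGraph.induce (pexplVerts G a₁ a₂ r) (expl G a₁ a₂ r)

/-- `{v,w}` is an `r`-local 2-separator: `v,w` have distance at most `r/2` and the
punctured explorer-neighbourhood is disconnected. -/
def IsLocalTwoSep (G : SimpleGraph V) (r : ℕ) (v w : V) : Prop :=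
  v ≠ w ∧ G.Reachable v w ∧ 2 * G.dist v w ≤ r ∧ ¬ (pexpl G v w r).Connected

/-- The pair `(p,q)` of vertices of `Expl(b₁,b₂)` crosses the local 2-separator `{b₁,b₂}`:
they lie in different components of the punctured explorer-neighbourhood and there is a cycle
of length at most `r` through them containing a copy of `b₁` or `b₂`. -/
def CrossesPair (G : SimpleGraph V) (r : ℕ) (b₁ b₂ : V) (p q : EVert V) : Prop :=
  ∃ (hp : p ∈ pexplVerts G b₁ b₂ r) (hq : q ∈ pexplVerts G b₁ b₂ r),
    ¬ (pexpl G b₁ b₂ r).Reachable ⟨p, hp⟩ ⟨q, hq⟩ ∧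
    ∃ (u : EVert V) (c : (expl G b₁ b₂ r).Walk u u), c.IsCycle ∧ c.length ≤ r ∧
      p ∈ c.support ∧ q ∈ c.support ∧ ∃ z ∈ c.support, z.1 = b₁ ∨ z.1 = b₂

/-- `{a₁,a₂}` crosses `{b₁,b₂}`: some copies of `a₁`, `a₂` cross `{b₁,b₂}`. -/
def Crosses (G : SimpleGraph V) (r : ℕ) (a₁ a₂ b₁ b₂ : V) : Prop :=
  ∃ p q : EVert V, p.1 = a₁ ∧ q.1 = a₂ ∧ CrossesPair G r b₁ b₂ p q

/-- Some copy of `x` lies in the same component of `Expl(v,w) - v - w` as some copy of `y`. -/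
def CopyReach (G : SimpleGraph V) (r : ℕ) (v w x y : V) : Prop :=
  ∃ (p q : EVert V) (hp : p ∈ pexplVerts G v w r) (hq : q ∈ pexplVerts G v w r),
    p.1 = x ∧ q.1 = y ∧ (pexpl G v w r).Reachable ⟨p, hp⟩ ⟨q, hq⟩

/-- A cycle through `a₁` alternating between `{a₁,a₂}` and `{b₁,b₂}`: the four vertices are
distinct and `b₁`, `b₂` lie on different arcs of the cycle between `a₁` and `a₂`. -/
def AltCycle (G : SimpleGraph V) (a₁ a₂ b₁ b₂ : V) (c : G.Walk a₁ a₁) : Prop :=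
  c.IsCycle ∧ b₁ ≠ b₂ ∧ b₁ ∉ ({a₁, a₂} : Set V) ∧ b₂ ∉ ({a₁, a₂} : Set V) ∧
  ∃ (p : G.Walk a₁ a₂) (q : G.Walk a₂ a₁), c = p.append q ∧
    ((b₁ ∈ p.support ∧ b₂ ∈ q.support) ∨ (b₂ ∈ p.support ∧ b₁ ∈ q.support))

/-- `S` is generated over `𝔽₂` by members of `C` (sum = symmetric difference). -/
def GeneratedBy {α : Type*} (C : Set (Set (Sym2 α))) (S : Set (Sym2 α)) : Prop :=
  ∃ l : List (Set (Sym2 α)), (∀ A ∈ l, A ∈ C) ∧ l.foldr symmDiff ∅ = S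

/-- The edge set of a walk. -/
def walkEdgeSet {α : Type*} {H : SimpleGraph α} {x y : α} (c : H.Walk x y) : Set (Sym2 α) :=
  {e | e ∈ c.edges}

open scoped symmDiff

theorem foldr_symmDiff_eq {β : Type*} [GeneralizedBooleanAlgebra β] (l : List β) (b : β) :
    l.foldr (· ∆ ·) b = l.foldr (· ∆ ·) ⊥ ∆ b := by
  induction l with
  | nil => exact (bot_symmDiff b).symm
  | cons A l ih => rw [List.foldr_cons, List.foldr_cons, ih, symmDiff_assoc]

section GeneratedBy

variable {α : Type*} {C : Set (Set (Sym2 α))}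

theorem generatedBy_empty : GeneratedBy C ∅ :=
  ⟨[], by simp, rfl⟩

theorem generatedBy_of_mem {S : Set (Sym2 α)} (h : S ∈ C) : GeneratedBy C S :=
  ⟨[S], by simpa using h, symmDiff_bot S⟩

theorem GeneratedBy.symmDiff {S T : Set (Sym2 α)} (hS : GeneratedBy C S)
    (hT : GeneratedBy C T) : GeneratedBy C (S ∆ T) := by
  obtain ⟨l₁, h₁, rfl⟩ := hS
  obtain ⟨l₂, h₂, rfl⟩ := hT
  refine ⟨l₁ ++ l₂, fun A hA => (List.mem_append.mp hA).elim (h₁ A) (h₂ A), ?_⟩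
  rw [List.foldr_append, foldr_symmDiff_eq]
  rfl

end GeneratedBy

section OddEdges

variable {W : Type*} [DecidableEq W] {H : SimpleGraph W}

/-- The sum over `𝔽₂` of the edges of a walk. -/
def oddEdges {x y : W} (w : H.Walk x y) : Set (Sym2 W) :=
  {e | Odd (w.edges.count e)}

theorem oddEdges_nil {x : W} : oddEdges (Walk.nil : H.Walk x x) = ∅ := by
  ext e; simp [oddEdges]

theorem oddEdges_append {x y z : W} (p : H.Walk x y) (q : H.Walk y z) :
    oddEdges (p.append q) = oddEdges p ∆ oddEdges q := by
  ext e
  simp only [oddEdges, Walk.edges_append, List.count_append, Set.mem_symmDiff,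
    Set.mem_ofPred_eq, Nat.odd_add, ← Nat.not_odd_iff_even]
  tauto

theorem oddEdges_cons {x y z : W} (h : H.Adj x y) (q : H.Walk y z) :
    oddEdges (Walk.cons h q) = {s(x, y)} ∆ oddEdges q := by
  rw [← Walk.cons_nil_append, oddEdges_append]
  congr
  ext e
  rcases eq_or_ne e s(x, y) with rfl | he
  · simp [oddEdges]
  · simp [oddEdges, List.count_singleton, he, he.symm]

theorem oddEdges_reverse {x y : W} (p : H.Walk x y) : oddEdges p.reverse = oddEdges p := by
  simp [oddEdges]

theorem oddEdges_rotate {x y : W} (c : H.Walk x x) (hy : y ∈ c.support) :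
    oddEdges (c.rotate y hy) = oddEdges c := by
  simp only [oddEdges, (c.rotate_edges y hy).perm.count_eq]

theorem oddEdges_eq_walkEdgeSet {x y : W} {p : H.Walk x y} (hp : p.IsTrail) :
    oddEdges p = walkEdgeSet p := by
  ext e
  simp only [oddEdges, walkEdgeSet, Set.mem_ofPred_eq]
  by_cases he : e ∈ p.edges
  · simp [List.count_eq_one_of_mem hp.edges_nodup he, he]
  · simp [List.count_eq_zero_of_not_mem he, he]

end OddEdges

def shortCycleEdgeSets {W : Type*} (H : SimpleGraph W) (L : ℕ) : Set (Set (Sym2 W)) :=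
  {S | ∃ (x : W) (d : H.Walk x x), d.IsCycle ∧ d.length ≤ L ∧ S = walkEdgeSet d}

section ClosedWalks

variable {W : Type*} [DecidableEq W] {H : SimpleGraph W}

theorem oddEdges_eq_empty_or_isCycle {u : W} (w : H.Walk u u) (hw : w.support.tail.Nodup) :
    oddEdges w = ∅ ∨ w.IsCycle := by
  cases w with
  | nil => exact Or.inl oddEdges_nil
  | @cons _ x _ h p =>
    have hp : p.IsPath := by simpa [Walk.isPath_def] using hw
    by_cases he : s(u, x) ∈ p.edges
    · left
      rw [hp.eq_adj_toWalk_of_mem_edges (Sym2.eq_swap ▸ he)]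
      simp [oddEdges_cons, oddEdges_nil, Sym2.eq_swap]
    · exact Or.inr ((Walk.cons_isCycle_iff p h).mpr ⟨hp, he⟩)

theorem exists_split_of_not_nodup {u : W} (w : H.Walk u u) (hw : ¬ w.support.tail.Nodup) :
    ∃ (y : W) (p q : H.Walk y y), 0 < p.length ∧ 0 < q.length ∧
      p.length + q.length = w.length ∧ oddEdges w = oddEdges p ∆ oddEdges q := by
  obtain ⟨y, hy⟩ := List.exists_duplicate_iff_not_nodup.mpr hw
  have hyw : y ∈ w.support := List.mem_of_mem_tail hy.mem
  have hcount : 2 ≤ (w.rotate y hyw).support.tail.count y := by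
    rw [(w.support_rotate y hyw).perm.count_eq]
    exact List.duplicate_iff_two_le_count.mp hy
  rw [← w.length_rotate y hyw, ← oddEdges_rotate w hyw]
  generalize w.rotate y hyw = c at hcount
  cases c with
  | nil => simp at hcount
  | cons h p' =>
    rw [Walk.support_cons, List.tail_cons] at hcount
    have hyp' : y ∈ p'.support := List.count_pos_iff.mp (by omega)
    have hsplit := p'.take_spec hyp'
    have hdrop : 1 ≤ (p'.dropUntil y hyp').support.tail.count y := by
      have := congrArg (List.count y ∘ Walk.support) hsplit
      simp only [Function.comp_apply, Walk.support_append, List.count_append,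
        Walk.count_support_takeUntil_eq_one] at this
      omega
    refine ⟨y, .cons h (p'.takeUntil y hyp'), p'.dropUntil y hyp', by simp, ?_, ?_, ?_⟩
    · have := hdrop.trans List.count_le_length
      simp only [List.length_tail, Walk.length_support] at this
      omega
    · have := congrArg Walk.length hsplit
      rw [Walk.length_append] at this
      simp only [Walk.length_cons]
      omega
    · rw [← oddEdges_append, Walk.cons_append, hsplit]

theorem generatedBy_oddEdges_of_length_le {L : ℕ} {u : W} (w : H.Walk u u) (hw : w.length ≤ L) :
    GeneratedBy (shortCycleEdgeSets H L) (oddEdges w) := by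
  induction hn : w.length using Nat.strong_induction_on generalizing u w with
  | _ n ih =>
    by_cases hnd : w.support.tail.Nodup
    · rcases oddEdges_eq_empty_or_isCycle w hnd with hempty | hcyc
      · rw [hempty]
        exact generatedBy_empty
      · rw [oddEdges_eq_walkEdgeSet hcyc.isTrail]
        exact generatedBy_of_mem ⟨u, w, hcyc, hw, rfl⟩
    · obtain ⟨y, p, q, hp, hq, hlen, hodd⟩ := exists_split_of_not_nodup w hnd
      rw [hodd]
      exact (ih _ (by omega) p (by omega) rfl).symmDiff (ih _ (by omega) q (by omega) rfl)

theorem generatedBy_oddEdges_of_rootedWalks {L : ℕ} {o : W} (P : ∀ x, H.Walk o x)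
    (hP : ∀ a b, H.Adj a b → (P a).length + (P b).length + 1 ≤ L) {a b : W} (c : H.Walk a b) :
    GeneratedBy (shortCycleEdgeSets H L) (oddEdges (P a) ∆ oddEdges (P b) ∆ oddEdges c) := by
  induction c with
  | nil =>
    rw [symmDiff_self, oddEdges_nil, bot_symmDiff]
    exact generatedBy_empty
  | @cons a m b h q ih =>
    have hT := generatedBy_oddEdges_of_length_le (L := L) ((P a).append (.cons h (P m).reverse))
      (by simp only [Walk.length_append, Walk.length_cons, Walk.length_reverse]; grind)
    rw [oddEdges_append, oddEdges_cons, oddEdges_reverse] at hT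
    have hsum : oddEdges (P a) ∆ oddEdges (P b) ∆ oddEdges (.cons h q) =
        oddEdges (P a) ∆ ({s(a, m)} ∆ oddEdges (P m)) ∆
          (oddEdges (P m) ∆ oddEdges (P b) ∆ oddEdges q) := by
      rw [oddEdges_cons, symmDiff_assoc (oddEdges (P a)) ({s(a, m)} ∆ _), symmDiff_assoc {s(a, m)},
        symmDiff_assoc (oddEdges (P m)), symmDiff_symmDiff_cancel_left, symmDiff_assoc,
        symmDiff_left_comm (oddEdges (P b))]
    rw [hsum]
    exact hT.symmDiff ih

end ClosedWalks

theorem generatedBy_walkEdgeSet_of_rootedWalks {W : Type*} {H : SimpleGraph W} {L : ℕ} {o : W}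
    (P : ∀ x, H.Walk o x) (hP : ∀ a b, H.Adj a b → (P a).length + (P b).length + 1 ≤ L)
    {u : W} {c : H.Walk u u} (hc : c.IsCycle) :
    GeneratedBy (shortCycleEdgeSets H L) (walkEdgeSet c) := by
  classical
  have h := generatedBy_oddEdges_of_rootedWalks P hP c
  rwa [symmDiff_self, bot_symmDiff, oddEdges_eq_walkEdgeSet hc.isTrail] at h

section Ball

variable {G : SimpleGraph V} {v : V} {r : ℕ}

theorem _root_.SimpleGraph.Reachable.exists_adj_dist_eq_of_dist_eq_succ {x : V} {d : ℕ}
    (hx : G.Reachable v x) (hd : G.dist v x = d + 1) : ∃ z, G.Adj z x ∧ G.dist v z = d := by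
  obtain ⟨p, hp⟩ := hx.exists_walk_length_eq_dist
  have hnil : ¬ p.Nil := by simp [← Walk.length_eq_zero_iff, hp, hd]
  refine ⟨p.penultimate, p.adj_penultimate hnil, le_antisymm ?_ ?_⟩
  · have := G.dist_le p.dropLast
    rw [Walk.length_dropLast, hp, hd] at this
    omega
  · obtain ⟨q, hq⟩ := p.dropLast.reachable.exists_walk_length_eq_dist
    have := G.dist_le (q.concat (p.adj_penultimate hnil))
    rw [Walk.length_concat, hq, hd] at this
    omega

theorem self_mem_ball_verts : v ∈ (ball G v r).verts :=
  ⟨.refl v, by simp⟩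

theorem dist_add_dist_add_one_le_of_ball_adj {a b : V} (h : (ball G v r).Adj a b) :
    G.dist v a + G.dist v b + 1 ≤ r := by
  obtain ⟨-, ⟨-, ha⟩, ⟨-, hb⟩, hboundary⟩ := h
  rcases Nat.even_or_odd r with hr | ⟨k, rfl⟩
  · have := hboundary hr
    obtain ⟨k, rfl⟩ := hr
    omega
  · omega

theorem exists_ball_walk_length_eq_dist (x : (ball G v r).verts) :
    ∃ p : (ball G v r).coe.Walk ⟨v, self_mem_ball_verts⟩ x, p.length = G.dist v x := by
  obtain ⟨x, hx⟩ := x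
  induction hd : G.dist v x generalizing x with
  | zero =>
    obtain rfl := hx.1.dist_eq_zero_iff.mp hd
    exact ⟨.nil, rfl⟩
  | succ d ih =>
    obtain ⟨z, hzx, hz⟩ := hx.1.exists_adj_dist_eq_of_dist_eq_succ hd
    have hzv : z ∈ (ball G v r).verts := ⟨hx.1.trans hzx.symm.reachable, by have := hx.2; omega⟩
    obtain ⟨p, hp⟩ := ih z hzv hz
    have hadj : (ball G v r).coe.Adj ⟨z, hzv⟩ ⟨x, hx⟩ := ⟨hzx, hzv, hx, fun _ h => by
      have : G.dist v z = G.dist v x := h.1.trans h.2.symm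
      omega⟩
    exact ⟨p.concat hadj, by rw [Walk.length_concat, hp]⟩

end Ball

/-- Every cycle of the ball `B_{r/2}(v)` is generated over `𝔽₂` by the cycles of length at
most `r` contained in `B_{r/2}(v)`. -/
theorem stmt2 {V : Type u} (G : SimpleGraph V) (v : V) (r : ℕ)
    {u : (ball G v r).verts} (c : (ball G v r).coe.Walk u u) (hc : c.IsCycle) :
    GeneratedBy
      {S | ∃ (w : (ball G v r).verts) (d : (ball G v r).coe.Walk w w),
        d.IsCycle ∧ d.length ≤ r ∧ S = walkEdgeSet d}
      (walkEdgeSet c) := by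
  choose P hP using exists_ball_walk_length_eq_dist (G := G) (v := v) (r := r)
  refine generatedBy_walkEdgeSet_of_rootedWalks P (fun a b hab => ?_) hc
  rw [hP, hP]
  exact dist_add_dist_add_one_le_of_ball_adj hab

end LocalSep
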